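/- Let M be the monoid presented by ⟨ a, a⁻¹, b, b⁻¹, h | aa⁻¹=a⁻¹a=bb⁻¹=b⁻¹b=1, xh=hx, hxy=hyx (x,y ∈ {a,a⁻¹,b,b⁻¹}), h²a=h²a⁻¹=h²b=h²b⁻¹=h³=h² ⟩. For words w₁, w₂ over {a,a⁻¹,b,b⁻¹}, hw₁ = hw₂ holds in M if and only if w₁ and w₂ represent the same element of the free abelian group on {a,b} (i.e., the exponent sums of a and of b agree). -/
import Mathlib


/-- The five generating letters `a, a⁻¹, b, b⁻¹, h`. -/
inductive L : Type
  | a | a' | b | b' | h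
deriving DecidableEq

/-- Words over the five letters. -/
abbrev W : Type := FreeMonoid L

/-- The one-letter word. -/
def gen (x : L) : W := FreeMonoid.of x

open L in
/-- The defining relations of the monoid `M`. -/
inductive rel : W → W → Prop
  | inv_aa' : rel (gen a * gen a') 1
  | inv_a'a : rel (gen a' * gen a) 1
  | inv_bb' : rel (gen b * gen b') 1
  | inv_b'b : rel (gen b' * gen b) 1
  | comm (x : L) (hx : x ≠ h) : rel (gen x * gen h) (gen h * gen x)
  | swap (x y : L) (hx : x ≠ h) (hy : y ≠ h) :
      rel (gen h * gen x * gen y) (gen h * gen y * gen x)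
  | zero (x : L) (hx : x ≠ h) : rel (gen h * gen h * gen x) (gen h * gen h)
  | zero_h : rel (gen h * gen h * gen h) (gen h * gen h)

/-- The congruence on the free monoid generated by the defining relations. -/
def Mcon : Con W := conGen rel

/-- The monoid `M` defined by the presentation. -/
abbrev M : Type := Mcon.Quotient

/-- The canonical projection from words to elements of `M`. -/
def π : W →* M := Mcon.mk'


/-- The exponent sum of `a` in a word (occurrences of `a` minus those of `a⁻¹`). -/
def expA (w : W) : ℤ :=
  ((FreeMonoid.toList w).map fun x => match x with
    | L.a => (1 : ℤ) | L.a' => -1 | _ => 0).sum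

/-- The exponent sum of `b` in a word (occurrences of `b` minus those of `b⁻¹`). -/
def expB (w : W) : ℤ :=
  ((FreeMonoid.toList w).map fun x => match x with
    | L.b => (1 : ℤ) | L.b' => -1 | _ => 0).sum

-- ==== auxiliary development ====

open L FreeMonoid

lemma mrel {u v : W} (r : rel u v) : Mcon u v := ConGen.Rel.of u v r

lemma expA_mul (u v : W) : expA (u * v) = expA u + expA v := by
  simp [expA, toList_mul]

lemma expB_mul (u v : W) : expB (u * v) = expB u + expB v := by
  simp [expB, toList_mul]

/-- grade = number of h's -/
def hgrade (w : W) : ℕ := (toList w).count L.h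

lemma hgrade_mul (u v : W) : hgrade (u * v) = hgrade u + hgrade v := by
  simp [hgrade, toList_mul]

def Phi (w : W) : Option (ℕ × ℤ × ℤ) :=
  if 2 ≤ hgrade w then none else some (hgrade w, expA w, expB w)

def bop : Option (ℕ × ℤ × ℤ) → Option (ℕ × ℤ × ℤ) → Option (ℕ × ℤ × ℤ)
  | some (g₁, x₁, y₁), some (g₂, x₂, y₂) =>
      if 2 ≤ g₁ + g₂ then none else some (g₁ + g₂, x₁ + x₂, y₁ + y₂)
  | _, _ => none

lemma Phi_mul (u v : W) : Phi (u * v) = bop (Phi u) (Phi v) := by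
  have hm : hgrade (u * v) = hgrade u + hgrade v := hgrade_mul u v
  unfold Phi
  rcases le_or_gt 2 (hgrade u) with hu | hu
  · rw [if_pos (show 2 ≤ hgrade (u * v) by omega), if_pos hu]; rfl
  rcases le_or_gt 2 (hgrade v) with hv | hv
  · rw [if_pos (show 2 ≤ hgrade (u * v) by omega),
      if_neg (show ¬ 2 ≤ hgrade u by omega), if_pos hv]; rfl
  rw [if_neg (show ¬ 2 ≤ hgrade u by omega), if_neg (show ¬ 2 ≤ hgrade v by omega)]
  show _ = if 2 ≤ hgrade u + hgrade v then none else _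
  rw [← hm]
  rcases le_or_gt 2 (hgrade (u * v)) with hs | hs
  · rw [if_pos hs, if_pos hs]
  · rw [if_neg (not_le.mpr hs), if_neg (not_le.mpr hs), hm, expA_mul, expB_mul]

lemma Phi_rel {u v : W} (r : rel u v) : Phi u = Phi v := by
  cases r with
  | comm x hx => cases x <;> first | exact absurd rfl hx | decide
  | swap x y hx hy =>
      cases x <;> cases y <;>
        first | exact absurd rfl hx | exact absurd rfl hy | decide
  | zero x hx => cases x <;> first | exact absurd rfl hx | decide
  | _ => decide

lemma Phi_invariant {u v : W} (hc : Mcon u v) : Phi u = Phi v := by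
  have h : ConGen.Rel rel u v := hc
  clear hc
  induction h with
  | of _ _ hr => exact Phi_rel hr
  | refl => rfl
  | symm _ ih => exact ih.symm
  | trans _ _ ih₁ ih₂ => exact ih₁.trans ih₂
  | mul _ _ ih₁ ih₂ => rw [Phi_mul, Phi_mul, ih₁, ih₂]

-- ==== converse direction: normal forms ====

lemma gen_eq_of (x : L) : gen x = FreeMonoid.of x := rfl

lemma comm_con (x : L) : Mcon (gen L.h * gen x) (gen x * gen L.h) := by
  by_cases hx : x = L.h
  · subst hx; exact Mcon.refl _
  · exact Mcon.symm (mrel (rel.comm x hx))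

lemma perm_lemma : ∀ {u v : List L}, u.Perm v →
    Mcon (gen L.h * ofList u) (gen L.h * ofList v) := by
  intro u v p
  induction p with
  | nil => exact Mcon.refl _
  | @cons x l₁ l₂ p ih =>
      rw [ofList_cons, ofList_cons, ← gen_eq_of]
      refine Mcon.trans ?_ (Mcon.trans (Mcon.mul (Mcon.refl (gen x)) ih) ?_)
      · simpa [mul_assoc] using Mcon.mul (comm_con x) (Mcon.refl (ofList l₁))
      · simpa [mul_assoc] using Mcon.mul (Mcon.symm (comm_con x)) (Mcon.refl (ofList l₂))
  | @swap x y l =>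
      rw [ofList_cons, ofList_cons, ofList_cons, ofList_cons, ← gen_eq_of, ← gen_eq_of]
      by_cases hx : x = L.h
      · subst hx
        simpa [mul_assoc] using
          Mcon.mul (Mcon.mul (Mcon.refl (gen L.h)) (Mcon.symm (comm_con y)))
            (Mcon.refl (ofList l))
      · by_cases hy : y = L.h
        · subst hy
          simpa [mul_assoc] using
            Mcon.mul (Mcon.mul (Mcon.refl (gen L.h)) (comm_con x)) (Mcon.refl (ofList l))
        · simpa [mul_assoc] using
            Mcon.mul (mrel (rel.swap y x hy hx)) (Mcon.refl (ofList l))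
  | trans p q ih₁ ih₂ => exact Mcon.trans ih₁ ih₂

-- ==== cancellation ====

def cw (x x' : L) (n : ℤ) : W :=
  if 0 ≤ n then (gen x) ^ n.toNat else (gen x') ^ (-n).toNat

lemma cancel (x x' : L) (hr : Mcon (gen x * gen x') 1) :
    ∀ p q : ℕ, Mcon ((gen x) ^ p * (gen x') ^ q) (cw x x' ((p : ℤ) - q)) := by
  intro p
  induction p with
  | zero =>
      intro q
      have hc : cw x x' ((0 : ℕ) - (q : ℤ)) = (gen x') ^ q := by
        unfold cw
        rcases q with _ | s
        · norm_num
        · rw [if_neg (by push_cast; omega)]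
          congr 1 <;> omega
      rw [hc, pow_zero, one_mul]
      exact Mcon.refl _
  | succ p ih =>
      intro q
      rcases q with _ | s
      · have hc : cw x x' ((p + 1 : ℕ) - ((0 : ℕ) : ℤ)) = (gen x) ^ (p + 1) := by
          unfold cw
          rw [if_pos (by push_cast; omega)]
          congr 1 <;> omega
        rw [hc, pow_zero, mul_one]
        exact Mcon.refl _
      · have key : Mcon ((gen x) ^ (p + 1) * (gen x') ^ (s + 1))
            ((gen x) ^ p * (gen x') ^ s) := by
          have he : (gen x) ^ (p + 1) * (gen x') ^ (s + 1) =
              (gen x) ^ p * ((gen x * gen x') * (gen x') ^ s) := by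
            rw [pow_succ, pow_succ']
            simp [mul_assoc]
          rw [he]
          simpa using Mcon.mul (Mcon.refl ((gen x) ^ p)) (Mcon.mul hr (Mcon.refl _))
        refine Mcon.trans key ?_
        rw [show ((p + 1 : ℕ) : ℤ) - ((s + 1 : ℕ) : ℤ) = (p : ℤ) - s by push_cast; omega]
        exact ih s

-- ==== counting ====

lemma expA_ofList (l : List L) :
    expA (ofList l) = (l.count L.a : ℤ) - l.count L.a' := by
  induction l with
  | nil => rfl
  | cons x t ih =>
      simp only [expA, toList_ofList, List.map_cons, List.sum_cons,
        List.count_cons] at ih ⊢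
      cases x <;> simp [ih] <;> push_cast <;> ring

lemma expB_ofList (l : List L) :
    expB (ofList l) = (l.count L.b : ℤ) - l.count L.b' := by
  induction l with
  | nil => rfl
  | cons x t ih =>
      simp only [expB, toList_ofList, List.map_cons, List.sum_cons,
        List.count_cons] at ih ⊢
      cases x <;> simp [ih] <;> push_cast <;> ring

lemma ofList_replicate (x : L) (n : ℕ) :
    ofList (List.replicate n x) = (gen x) ^ n := by
  induction n with
  | zero => rfl
  | succ n ih => rw [List.replicate_succ, ofList_cons, ih, pow_succ', gen_eq_of]

/-- canonical list -/
def canon (l : List L) : List L :=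
  List.replicate (l.count L.a) L.a ++ List.replicate (l.count L.a') L.a' ++
    (List.replicate (l.count L.b) L.b ++ List.replicate (l.count L.b') L.b')

lemma perm_canon (l : List L) (hl : ∀ x ∈ l, x ≠ L.h) : l.Perm (canon l) := by
  rw [List.perm_iff_count]
  intro x
  have hh : l.count L.h = 0 := by
    rw [List.count_eq_zero]
    intro hm
    exact hl _ hm rfl
  cases x <;> simp [canon, List.count_append, List.count_replicate, hh]

lemma normal_form (w : W) (hw : ∀ x ∈ FreeMonoid.toList w, x ≠ L.h) :
    Mcon (gen L.h * w)
      (gen L.h * (cw L.a L.a' (expA w) * cw L.b L.b' (expB w))) := by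
  set l := FreeMonoid.toList w with hl
  have hwl : w = ofList l := (ofList_toList w).symm
  have step1 : Mcon (gen L.h * w) (gen L.h * ofList (canon l)) := by
    rw [hwl]
    exact perm_lemma (perm_canon l hw)
  have hsplit : ofList (canon l) =
      ((gen L.a) ^ (l.count L.a) * (gen L.a') ^ (l.count L.a')) *
        ((gen L.b) ^ (l.count L.b) * (gen L.b') ^ (l.count L.b')) := by
    simp [canon, ofList_append, ofList_replicate, mul_assoc]
  have hA : expA w = (l.count L.a : ℤ) - l.count L.a' := by
    rw [hwl]; exact expA_ofList l
  have hB : expB w = (l.count L.b : ℤ) - l.count L.b' := by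
    rw [hwl]; exact expB_ofList l
  refine Mcon.trans step1 ?_
  rw [hsplit, hA, hB]
  exact Mcon.mul (Mcon.refl _)
    (Mcon.mul (cancel L.a L.a' (mrel rel.inv_aa') _ _)
      (cancel L.b L.b' (mrel rel.inv_bb') _ _))

/-- For words `w₁, w₂` over `{a,a⁻¹,b,b⁻¹}`, one has
`h w₁ = h w₂` in `M` iff `w₁` and `w₂` represent the same element of the free
abelian group on `{a,b}`, i.e. the exponent sums of `a` and of `b` agree. -/
theorem stmt_15 (w₁ w₂ : W)
    (h₁ : ∀ x ∈ FreeMonoid.toList w₁, x ≠ L.h)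
    (h₂ : ∀ x ∈ FreeMonoid.toList w₂, x ≠ L.h) :
    π (gen L.h * w₁) = π (gen L.h * w₂) ↔
      expA w₁ = expA w₂ ∧ expB w₁ = expB w₂ := by
  have hπ : ∀ u v : W, π u = π v ↔ Mcon u v := fun u v => Con.eq _
  constructor
  · intro hp
    have hc : Mcon (gen L.h * w₁) (gen L.h * w₂) := (hπ _ _).mp hp
    have hΦ := Phi_invariant hc
    have hg : ∀ (w : W), (∀ x ∈ FreeMonoid.toList w, x ≠ L.h) →
        hgrade (gen L.h * w) = 1 := by
      intro w hw
      have : (FreeMonoid.toList w).count L.h = 0 := by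
        rw [List.count_eq_zero]
        intro hm
        exact hw _ hm rfl
      simp [hgrade, toList_mul, List.count_append, this, gen, toList_of]
    have hea : ∀ w : W, expA (gen L.h * w) = expA w := by
      intro w; rw [expA_mul]; simp [expA, gen, toList_of]
    have heb : ∀ w : W, expB (gen L.h * w) = expB w := by
      intro w; rw [expB_mul]; simp [expB, gen, toList_of]
    unfold Phi at hΦ
    rw [hg w₁ h₁, hg w₂ h₂] at hΦ
    norm_num at hΦ
    rw [hea, hea, heb, heb] at hΦ
    exact hΦ
  · rintro ⟨hA, hB⟩
    rw [hπ]
    refine Mcon.trans (normal_form w₁ h₁) (Mcon.trans ?_ (Mcon.symm (normal_form w₂ h₂)))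
    rw [hA, hB]
    exact Mcon.refl _
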